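/- The function J : (0,∞) → ℝ defined by J(α) = ∫₀^α (√α/√(α−s)) · s (1+s²)^{-5/4} ds (equivalently J(α) = ∫₀¹ (t/√(1−t)) · α² (1+α²t²)^{-5/4} dt) is differentiable and satisfies J'(α) > 0 for all α > 0. -/

import Mathlib

/-!
Substituting `s = α (1 - w²)` removes the singularity of the kernel:
`J(α) = ∫₀¹ 2α f(α(1 - w²)) dw` with `f(x) = x (1 + x²)^(-5/4)`, an integrand that is smooth
in `α`, so `J'(α) = ∫₀¹ (2f + 2x f')(α(1 - w²)) dw`. That integrand can change sign, but
subtracting the derivative of `w ↦ -w (1 - w²) f(α(1 - w²))`, which vanishes at both ends, turns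
it into `(1 - w²) (3f + 2x f')(α(1 - w²))`, and `3f(x) + 2x f'(x) = 5x (1 + x²)^(-9/4) > 0` for
`x > 0`.
-/

open Real MeasureTheory

/-- `J(α) = ∫₀^α (√α/√(α−s)) · s (1+s²)^{-5/4} ds`. -/
noncomputable def Jfun (α : ℝ) : ℝ :=
  ∫ s in (0:ℝ)..α, (Real.sqrt α / Real.sqrt (α - s)) * (s * (1 + s ^ 2) ^ (-(5:ℝ)/4))

open Set Function Filter Topology

theorem intervalIntegral.hasDerivAt_integral_of_continuous_deriv
    {E : Type*} [NormedAddCommGroup E] [NormedSpace ℝ E] [CompleteSpace E]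
    {F F' : ℝ → ℝ → E} {a b x₀ : ℝ}
    (hF : Continuous (uncurry F)) (hF' : Continuous (uncurry F'))
    (hderiv : ∀ x t, HasDerivAt (F · t) (F' x t) x) :
    HasDerivAt (fun x => ∫ t in a..b, F x t) (∫ t in a..b, F' x₀ t) x₀ := by
  obtain ⟨C, hC⟩ := ((isCompact_closedBall x₀ 1).prod isCompact_uIcc).exists_bound_of_continuousOn
    (hF'.continuousOn (s := Metric.closedBall x₀ 1 ×ˢ uIcc a b))
  have hF_sec : ∀ x, Continuous (F x) := fun x => hF.comp (Continuous.prodMk_right x)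
  refine (hasDerivAt_integral_of_dominated_loc_of_deriv_le (bound := fun _ => C)
    (Metric.ball_mem_nhds x₀ one_pos) (.of_forall fun x => (hF_sec x).aestronglyMeasurable)
    ((hF_sec x₀).intervalIntegrable _ _)
    (hF'.comp (Continuous.prodMk_right x₀)).aestronglyMeasurable ?_ intervalIntegrable_const
    (.of_forall fun t _ x _ => hderiv x t)).2
  exact .of_forall fun t ht x hx =>
    hC (x, t) ⟨Metric.ball_subset_closedBall hx, uIoc_subset_uIcc ht⟩

theorem image_mul_one_sub_sq_Ioo {α : ℝ} (hα : 0 < α) :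
    (fun w : ℝ => α * (1 - w ^ 2)) '' Ioo 0 1 = Ioo 0 α := by
  ext s
  constructor
  · rintro ⟨w, ⟨hw₀, hw₁⟩, rfl⟩
    have hq : 0 < 1 - w ^ 2 := by nlinarith
    exact ⟨mul_pos hα hq, by nlinarith [mul_pos hα (pow_pos hw₀ 2)]⟩
  · rintro ⟨hs₀, hsα⟩
    have hq : 0 < 1 - s / α := by rw [sub_pos, div_lt_one hα]; exact hsα
    refine ⟨√(1 - s / α), ⟨sqrt_pos.2 hq, (sqrt_lt' one_pos).2 ?_⟩, ?_⟩
    · linarith [div_pos hs₀ hα]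
    · dsimp only
      rw [sq_sqrt hq.le]
      field_simp
      ring

theorem integral_sqrt_div_sqrt_sub_mul_eq {α : ℝ} (hα : 0 < α) (h : ℝ → ℝ) :
    ∫ s in (0:ℝ)..α, √α / √(α - s) * h s =
      ∫ w in (0:ℝ)..1, 2 * α * h (α * (1 - w ^ 2)) := by
  have hderiv : ∀ w ∈ Ioo (0:ℝ) 1,
      HasDerivWithinAt (fun w : ℝ => α * (1 - w ^ 2)) (α * -(2 * w)) (Ioo 0 1) w := by
    intro w _
    have := ((hasDerivAt_pow 2 w).const_sub 1).const_mul α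
    simp only [Nat.cast_ofNat] at this
    exact (this.congr_deriv (by ring)).hasDerivWithinAt
  have hinj : InjOn (fun w : ℝ => α * (1 - w ^ 2)) (Ioo 0 1) := by
    intro v hv w hw hvw
    have : v ^ 2 = w ^ 2 := by simpa [hα.ne'] using hvw
    exact (sq_eq_sq₀ hv.1.le hw.1.le).1 this
  rw [intervalIntegral.integral_of_le hα.le, intervalIntegral.integral_of_le zero_le_one,
    integral_Ioc_eq_integral_Ioo, integral_Ioc_eq_integral_Ioo,
    ← image_mul_one_sub_sq_Ioo hα,
    integral_image_eq_integral_abs_deriv_smul measurableSet_Ioo hderiv hinj]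
  refine setIntegral_congr_fun measurableSet_Ioo fun w ⟨hw₀, _⟩ => ?_
  have hsqrt : √(α - α * (1 - w ^ 2)) = √α * w := by
    rw [show α - α * (1 - w ^ 2) = α * w ^ 2 by ring, sqrt_mul hα.le, sqrt_sq hw₀.le]
  have : 0 < √α := sqrt_pos.2 hα
  rw [smul_eq_mul, hsqrt, abs_of_neg (by nlinarith)]
  field_simp

theorem integral_comp_one_sub_sq_by_parts {f f' : ℝ → ℝ}
    (hf : ∀ x, HasDerivAt f (f' x) x) (hf' : Continuous f') (σ : ℝ) :
    ∫ w in (0:ℝ)..1, (2 * f (σ * (1 - w ^ 2)) + 2 * σ * (1 - w ^ 2) * f' (σ * (1 - w ^ 2))) =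
      ∫ w in (0:ℝ)..1,
        (1 - w ^ 2) *
          (3 * f (σ * (1 - w ^ 2)) + 2 * (σ * (1 - w ^ 2)) * f' (σ * (1 - w ^ 2))) := by
  have hfc : Continuous f := continuous_iff_continuousAt.2 fun x => (hf x).continuousAt
  have hboundary : ∀ w, HasDerivAt (fun w => -(w * (1 - w ^ 2) * f (σ * (1 - w ^ 2))))
      ((2 * f (σ * (1 - w ^ 2)) + 2 * σ * (1 - w ^ 2) * f' (σ * (1 - w ^ 2))) -
        (1 - w ^ 2) *
          (3 * f (σ * (1 - w ^ 2)) + 2 * (σ * (1 - w ^ 2)) * f' (σ * (1 - w ^ 2)))) w := by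
    intro w
    have hq : HasDerivAt (fun w : ℝ => 1 - w ^ 2) (-(2 * w)) w := by
      simpa using (hasDerivAt_pow 2 w).const_sub 1
    have := (((hasDerivAt_id w).mul hq).mul ((hf _).comp w (hq.const_mul σ))).neg
    exact this.congr_deriv (by simp only [Pi.mul_apply, comp_apply, id]; ring)
  rw [← sub_eq_zero, ← intervalIntegral.integral_sub
      (Continuous.intervalIntegrable (by fun_prop) _ _)
      (Continuous.intervalIntegrable (by fun_prop) _ _),
    intervalIntegral.integral_eq_sub_of_hasDerivAt (fun w _ => hboundary w)
      (Continuous.intervalIntegrable (by fun_prop) _ _)]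
  norm_num

theorem hasDerivAt_integral_two_mul_comp_one_sub_sq {f f' : ℝ → ℝ}
    (hf : ∀ x, HasDerivAt f (f' x) x) (hf' : Continuous f') (σ : ℝ) :
    HasDerivAt (fun σ => ∫ w in (0:ℝ)..1, 2 * σ * f (σ * (1 - w ^ 2)))
      (∫ w in (0:ℝ)..1,
        (1 - w ^ 2) *
          (3 * f (σ * (1 - w ^ 2)) + 2 * (σ * (1 - w ^ 2)) * f' (σ * (1 - w ^ 2)))) σ := by
  have hfc : Continuous f := continuous_iff_continuousAt.2 fun x => (hf x).continuousAt
  rw [← integral_comp_one_sub_sq_by_parts hf hf']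
  refine intervalIntegral.hasDerivAt_integral_of_continuous_deriv
    (F := fun σ w => 2 * σ * f (σ * (1 - w ^ 2)))
    (F' := fun σ w => 2 * f (σ * (1 - w ^ 2)) + 2 * σ * (1 - w ^ 2) * f' (σ * (1 - w ^ 2)))
    (by fun_prop) (by fun_prop) fun σ w => ?_
  have := ((hasDerivAt_id σ).const_mul 2).mul ((hf _).comp σ (hasDerivAt_mul_const (1 - w ^ 2)))
  exact this.congr_deriv (by simp only [comp_apply, id]; ring)

noncomputable def decayProfile (a x : ℝ) : ℝ := x * (1 + x ^ 2) ^ (-a)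

noncomputable def decayProfileDeriv (a x : ℝ) : ℝ :=
  (1 + x ^ 2) ^ (-a) - 2 * a * x ^ 2 * (1 + x ^ 2) ^ (-a - 1)

theorem hasDerivAt_decayProfile (a x : ℝ) :
    HasDerivAt (decayProfile a) (decayProfileDeriv a x) x := by
  have hbase : HasDerivAt (fun x : ℝ => 1 + x ^ 2) (2 * x) x := by
    simpa using (hasDerivAt_pow 2 x).const_add 1
  have := (hasDerivAt_id x).mul (hbase.rpow_const (p := -a) (.inl (by positivity)))
  exact this.congr_deriv (by simp only [decayProfileDeriv, id]; ring)

theorem continuous_decayProfile (a : ℝ) : Continuous (decayProfile a) :=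
  continuous_iff_continuousAt.2 fun x => (hasDerivAt_decayProfile a x).continuousAt

theorem continuous_decayProfileDeriv (a : ℝ) : Continuous (decayProfileDeriv a) := by
  have hpow : ∀ p : ℝ, Continuous fun x : ℝ => (1 + x ^ 2) ^ p := fun p =>
    (continuous_const.add (continuous_pow 2)).rpow_const fun x =>
      .inl (by positivity : (0:ℝ) < 1 + x ^ 2).ne'
  unfold decayProfileDeriv
  fun_prop

theorem three_mul_decayProfile_add_two_mul_deriv_pos {a x : ℝ} (ha : a ≤ 5 / 4) (hx : 0 < x) :
    0 < 3 * decayProfile a x + 2 * x * decayProfileDeriv a x := by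
  have hsplit : (1 + x ^ 2) ^ (-a) = (1 + x ^ 2) * (1 + x ^ 2) ^ (-a - 1) := by
    rw [mul_comm, ← rpow_add_one (by positivity), sub_add_cancel]
  have hfactor : 3 * decayProfile a x + 2 * x * decayProfileDeriv a x =
      x * (1 + x ^ 2) ^ (-a - 1) * (5 + (5 - 4 * a) * x ^ 2) := by
    rw [decayProfile, decayProfileDeriv, hsplit]; ring
  have : 0 ≤ (5 - 4 * a) * x ^ 2 := mul_nonneg (by linarith) (sq_nonneg x)
  rw [hfactor]
  positivity

/-- `J` is differentiable on `(0,∞)` with `J'(α) > 0` for all `α > 0`. -/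
theorem stmt_10 :
    ∀ α ∈ Set.Ioi (0:ℝ), DifferentiableAt ℝ Jfun α ∧ 0 < deriv Jfun α := by
  intro α (hα : 0 < α)
  have hJ : Jfun =ᶠ[𝓝 α]
      fun σ : ℝ => ∫ w in (0:ℝ)..1, 2 * σ * decayProfile (5 / 4) (σ * (1 - w ^ 2)) := by
    filter_upwards [Ioi_mem_nhds hα] with σ hσ
    rw [Jfun, neg_div]
    exact integral_sqrt_div_sqrt_sub_mul_eq hσ (decayProfile (5 / 4))
  have hf := continuous_decayProfile (5 / 4)
  have hf' := continuous_decayProfileDeriv (5 / 4)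
  have hJ' := (hasDerivAt_integral_two_mul_comp_one_sub_sq (hasDerivAt_decayProfile (5 / 4))
    hf' α).congr_of_eventuallyEq hJ
  refine ⟨hJ'.differentiableAt, hJ'.deriv ▸ ?_⟩
  refine intervalIntegral.intervalIntegral_pos_of_pos_on
    (Continuous.intervalIntegrable (by fun_prop) _ _) (fun w ⟨hw₀, hw₁⟩ => ?_) zero_lt_one
  have hq : 0 < 1 - w ^ 2 := by nlinarith
  exact mul_pos hq (three_mul_decayProfile_add_two_mul_deriv_pos (by norm_num) (mul_pos hα hq))
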